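/- arXiv:1204.5491 — 5 statements merged into one kernel-verified Lean document; each statement's English description precedes it below -/
import Mathlib

section
/- Theorem (left S-resolvent equation): Let V be a two-sided quaternionic Banach space, let T ∈ B(V) and let s ∈ ρ_S(T). Then the left S-resolvent operator satisfies S_L^{-1}(s,T) ∘ (sℐ) − T ∘ S_L^{-1}(s,T) = ℐ in B(V). -/
/- Setting: a two-sided quaternionic Banach space `V`, i.e. a real Banach space with
commuting left and right `ℍ`-module structures (the right structure is encoded as a
module structure over `ℍᵐᵒᵖ`), both compatible with the real structure and with
continuous (bounded) scalar multiplications.  `B(V)` is the ring `V →L[ℍᵐᵒᵖ] V` of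
bounded right-linear operators on `V`. -/

open Quaternion MulOpposite

variable {V : Type*} [NormedAddCommGroup V] [NormedSpace ℝ V] [CompleteSpace V]
  [Module ℍ[ℝ] V] [Module ℍ[ℝ]ᵐᵒᵖ V]
  [IsScalarTower ℝ ℍ[ℝ] V] [IsScalarTower ℝ ℍ[ℝ]ᵐᵒᵖ V]
  [SMulCommClass ℍ[ℝ] ℍ[ℝ]ᵐᵒᵖ V]
  [ContinuousConstSMul ℍ[ℝ] V] [ContinuousConstSMul ℍ[ℝ]ᵐᵒᵖ V]

/-- For `a ∈ ℍ`, the operator `aℐ : v ↦ a • v`, which is right-linear since the two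
module structures commute. -/
noncomputable def lMulOp (a : ℍ[ℝ]) : V →L[ℍ[ℝ]ᵐᵒᵖ] V :=
  { toFun := fun v => a • v
    map_add' := fun u v => smul_add a u v
    map_smul' := fun b v => smul_comm a b v
    cont := continuous_const_smul a }

/-- `Q_s(T) = T² − 2 Re(s) T + |s|² ℐ`. -/
noncomputable def Qs (T : V →L[ℍ[ℝ]ᵐᵒᵖ] V) (s : ℍ[ℝ]) : V →L[ℍ[ℝ]ᵐᵒᵖ] V :=
  T * T - (2 * s.re) • T + (‖s‖ ^ 2) • 1

/-- The left `S`-resolvent operator `S_L^{-1}(s,T) = −Q_s(T)⁻¹ (T − s̄ℐ)`. -/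
noncomputable def SLinv (T : V →L[ℍ[ℝ]ᵐᵒᵖ] V) (s : ℍ[ℝ]) : V →L[ℍ[ℝ]ᵐᵒᵖ] V :=
  -(Ring.inverse (Qs T s) * (T - lMulOp (star s)))

/-! Since `T` commutes with `Q_s(T)`, it commutes with `Q_s(T)⁻¹`, so multiplying out gives
`S_L^{-1}(s,T) s − T S_L^{-1}(s,T) = Q_s(T)⁻¹ (T (T − s̄) − (T − s̄) s)`. The bracket is
`T² − T (s + s̄) + s̄ s = Q_s(T)`, because `s + s̄ = 2 Re(s)` and `s̄ s = |s|²` are real and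
`a ↦ aℐ` is an ℝ-algebra homomorphism, so these two operators are real multiples of `ℐ`. -/

theorem Commute.ringInverse_right {M₀ : Type*} [MonoidWithZero M₀] {a b : M₀}
    (h : Commute a b) : Commute a (Ring.inverse b) := by
  by_cases hb : IsUnit b
  · obtain ⟨u, rfl⟩ := hb
    rw [Ring.inverse_unit]
    exact h.units_inv_right
  · rw [Ring.inverse_non_unit b hb]
    exact Commute.zero_right a

theorem commute_Qs {W : Type*} [NormedAddCommGroup W] [NormedSpace ℝ W] [Module ℍ[ℝ]ᵐᵒᵖ W]
    [IsScalarTower ℝ ℍ[ℝ]ᵐᵒᵖ W] (T : W →L[ℍ[ℝ]ᵐᵒᵖ] W) (s : ℍ[ℝ]) : Commute T (Qs T s) :=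
  (((Commute.refl T).mul_right (Commute.refl T)).sub_right
    ((Commute.refl T).smul_right _)).add_right ((Commute.one_right T).smul_right _)

section lMulOp

variable {W : Type*} [NormedAddCommGroup W] [NormedSpace ℝ W]
  [Module ℍ[ℝ] W] [Module ℍ[ℝ]ᵐᵒᵖ W] [IsScalarTower ℝ ℍ[ℝ] W] [IsScalarTower ℝ ℍ[ℝ]ᵐᵒᵖ W]
  [SMulCommClass ℍ[ℝ] ℍ[ℝ]ᵐᵒᵖ W] [ContinuousConstSMul ℍ[ℝ] W]

noncomputable def lMulAlgHom : ℍ[ℝ] →ₐ[ℝ] (W →L[ℍ[ℝ]ᵐᵒᵖ] W) where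
  toFun := lMulOp
  map_one' := by ext v; exact one_smul ℍ[ℝ] v
  map_mul' a b := by ext v; exact mul_smul a b v
  map_zero' := by ext v; exact zero_smul ℍ[ℝ] v
  map_add' a b := by ext v; exact add_smul a b v
  commutes' r := by ext v; exact (algebraMap_smul ℍ[ℝ] r v).trans (algebraMap_smul _ r v).symm

theorem lMulAlgHom_apply (a : ℍ[ℝ]) : lMulAlgHom a = (lMulOp a : W →L[ℍ[ℝ]ᵐᵒᵖ] W) := rfl

theorem lMulOp_add_lMulOp_star (s : ℍ[ℝ]) :
    (lMulOp s + lMulOp (star s) : W →L[ℍ[ℝ]ᵐᵒᵖ] W) = (2 * s.re) • 1 := by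
  rw [← lMulAlgHom_apply, ← lMulAlgHom_apply, ← map_add, self_add_star', ← algebraMap_def,
    AlgHom.commutes, Algebra.algebraMap_eq_smul_one]

theorem lMulOp_star_mul_lMulOp (s : ℍ[ℝ]) :
    (lMulOp (star s) * lMulOp s : W →L[ℍ[ℝ]ᵐᵒᵖ] W) = (‖s‖ ^ 2) • 1 := by
  rw [← lMulAlgHom_apply, ← lMulAlgHom_apply, ← map_mul, star_mul_self,
    normSq_eq_norm_mul_self, ← sq, ← algebraMap_def, AlgHom.commutes,
    Algebra.algebraMap_eq_smul_one]

theorem Qs_eq_mul_sub_sub_mul (T : W →L[ℍ[ℝ]ᵐᵒᵖ] W) (s : ℍ[ℝ]) :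
    Qs T s = T * (T - lMulOp (star s)) - (T - lMulOp (star s)) * lMulOp s := by
  have hexpand : T * (T - lMulOp (star s)) - (T - lMulOp (star s)) * lMulOp s =
      T * T - T * (lMulOp s + lMulOp (star s)) + lMulOp (star s) * lMulOp s := by
    simp only [mul_sub, sub_mul, mul_add]
    abel
  rw [hexpand, lMulOp_add_lMulOp_star, lMulOp_star_mul_lMulOp, mul_smul_one, Qs]

end lMulOp

/-- **The left S-resolvent equation**: if `s ∈ ρ_S(T)` (i.e. `Q_s(T)` is invertible in
`B(V)`), then `S_L^{-1}(s,T) ∘ (sℐ) − T ∘ S_L^{-1}(s,T) = ℐ`. -/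
theorem left_S_resolvent_equation (T : V →L[ℍ[ℝ]ᵐᵒᵖ] V) (s : ℍ[ℝ])
    (hs : IsUnit (Qs T s)) :
    SLinv T s * lMulOp s - T * SLinv T s = 1 := by
  set R := Ring.inverse (Qs T s)
  set X := T - lMulOp (star s)
  have hTR : T * R = R * T := (commute_Qs T s).ringInverse_right.eq
  calc SLinv T s * lMulOp s - T * SLinv T s = R * (T * X - X * lMulOp s) := by
        -- explicit arguments: `rw [neg_mul]` cannot unify `-?a * ?b` with the negation of `B(V)`
        rw [SLinv, neg_mul (R * X), mul_neg T (R * X), sub_neg_eq_add, ← mul_assoc T, hTR,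
          mul_assoc, mul_assoc, neg_add_eq_sub, ← mul_sub]
    _ = 1 := by rw [← Qs_eq_mul_sub_sub_mul, Ring.inverse_mul_cancel _ hs]
end

section
/- Theorem: Let V be a right ℍ-vector space and T : V → V a right-linear map. Then the point S-spectrum of T coincides with the right spectrum of T: {s ∈ ℍ : ∃ w ∈ V, w ≠ 0, T²w − 2Re(s)(Tw) + |s|²w = 0} = {s ∈ ℍ : ∃ v ∈ V, v ≠ 0, Tv = vs}. -/
/-! Since `2 Re(s) = s + s̄` and `|s|² = s̄ s = s s̄`, the S-equation factors as
`T²w − 2Re(s)(Tw) + |s|²w = T u − u s` with `u = Tw − w s̄`, and symmetrically with the roles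
of `s` and `s̄` exchanged. An eigenvector `v` for `s` makes the symmetric factor vanish. Conversely,
a solution `w` gives `T u = u s`, so either `u ≠ 0` is an eigenvector for `s`, or `Tw = w s̄`. In
the latter case `w q` is an eigenvector for `s` whenever `q ≠ 0` and `q s = s̄ q`; any nonzero pure
imaginary `q` orthogonal to `Im s` will do. -/

open Quaternion MulOpposite

section RightSpectrum

variable {R V : Type*} [Ring R] [AddCommGroup V] [Module Rᵐᵒᵖ V]

def rightSpectrum (T : V →ₗ[Rᵐᵒᵖ] V) : Set R :=
  {s | ∃ v : V, v ≠ 0 ∧ T v = op s • v}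

theorem map_map_sub_smul_add_smul (T : V →ₗ[Rᵐᵒᵖ] V) (w : V) (s t : R) :
    T (T w) - op (s + t) • T w + op (t * s) • w =
      T (T w - op t • w) - op s • (T w - op t • w) := by
  simp only [map_sub, map_smul, op_add, op_mul, add_smul, mul_smul, smul_sub]
  abel

theorem mem_rightSpectrum_of_mul_eq_mul {T : V →ₗ[Rᵐᵒᵖ] V} {s t q : R}
    (ht : t ∈ rightSpectrum T) (hq : IsUnit q) (hqs : q * s = t * q) :
    s ∈ rightSpectrum T := by
  obtain ⟨v, hv, hTv⟩ := ht
  refine ⟨op q • v, hq.op.smul_eq_zero.not.mpr hv, ?_⟩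
  rw [map_smul, hTv, smul_smul, smul_smul, ← op_mul, ← op_mul, hqs]

end RightSpectrum

namespace Quaternion

variable {R : Type*} [CommRing R]

theorem mul_eq_star_mul_of_re_eq_zero {q s : ℍ[R]} (hq : q.re = 0)
    (hqs : q.imI * s.imI + q.imJ * s.imJ + q.imK * s.imK = 0) :
    q * s = star s * q := by
  ext <;> simp only [re_mul, imI_mul, imJ_mul, imK_mul, re_star, imI_star, imJ_star, imK_star, hq]
  · linear_combination (-2 : R) * hqs
  all_goals ring

theorem exists_ne_zero_mul_eq_star_mul [Nontrivial R] (s : ℍ[R]) :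
    ∃ q : ℍ[R], q ≠ 0 ∧ q * s = star s * q := by
  by_cases h : s.imI = 0 ∧ s.imJ = 0
  · refine ⟨⟨0, 1, 0, 0⟩, fun hq => by simpa using congrArg QuaternionAlgebra.imI hq,
      mul_eq_star_mul_of_re_eq_zero rfl ?_⟩
    simp [h.1]
  · refine ⟨⟨0, -s.imJ, s.imI, 0⟩, fun hq => h ⟨?_, ?_⟩, mul_eq_star_mul_of_re_eq_zero rfl ?_⟩
    · simpa using congrArg QuaternionAlgebra.imJ hq
    · simpa using congrArg QuaternionAlgebra.imI hq
    · ring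

end Quaternion

/-- **Theorem**: the point S-spectrum of a right-linear operator `T` on a right
quaternionic vector space coincides with the right spectrum of `T`:
`{s : ∃ w ≠ 0, T²w − 2Re(s)(Tw) + |s|²w = 0} = {s : ∃ v ≠ 0, Tv = vs}`. -/
theorem pointSSpectrum_eq_rightSpectrum
    {V : Type*} [AddCommGroup V] [Module ℍ[ℝ]ᵐᵒᵖ V] (T : V →ₗ[ℍ[ℝ]ᵐᵒᵖ] V) :
    {s : ℍ[ℝ] | ∃ w : V, w ≠ 0 ∧
        T (T w) - op ((2 * s.re : ℝ) : ℍ[ℝ]) • T w + op ((‖s‖ ^ 2 : ℝ) : ℍ[ℝ]) • w = 0} =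
    {s : ℍ[ℝ] | ∃ v : V, v ≠ 0 ∧ T v = op s • v} := by
  ext s
  have hnorm : ((‖s‖ ^ 2 : ℝ) : ℍ[ℝ]) = normSq s := by rw [normSq_eq_norm_mul_self, sq]
  constructor
  · rintro ⟨w, hw, heq⟩
    rw [← self_add_star', hnorm, ← star_mul_self, map_map_sub_smul_add_smul, sub_eq_zero] at heq
    by_cases hu : T w - op (star s) • w = 0
    · obtain ⟨q, hq, hqs⟩ := exists_ne_zero_mul_eq_star_mul s
      exact mem_rightSpectrum_of_mul_eq_mul ⟨w, hw, sub_eq_zero.mp hu⟩ hq.isUnit hqs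
    · exact ⟨_, hu, heq⟩
  · rintro ⟨v, hv, hTv⟩
    refine ⟨v, hv, ?_⟩
    rw [← star_add_self', hnorm, ← self_mul_star, map_map_sub_smul_add_smul, hTv, sub_self,
      map_zero, smul_zero, sub_zero]
end

section
/- Theorem: Let H₁ = H₁* ∈ ℍ^{n×n} and H₂ = H₂* ∈ ℍ^{m×m} be invertible Hermitian matrices with equal negativity indices, ν₋(H₁) = ν₋(H₂). Let E ∈ ℍ^{m×n} be a contraction from (ℍⁿ, H₁) to (ℍ^m, H₂), i.e. (Ev)*H₂(Ev) ≤ v*H₁v for every v ∈ ℍⁿ. Then the adjoint E^[*] := H₁⁻¹E*H₂ ∈ ℍ^{n×m} is a contraction from (ℍ^m, H₂) to (ℍⁿ, H₁), i.e. (E^[*]u)*H₁(E^[*]u) ≤ u*H₂u for every u ∈ ℍ^m. -/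
/-!
The block matrix `M = [[H₁, Eᴴ], [E, H₂⁻¹]]` is congruent, by unitriangular block matrices, both to
`diag(H₁, S)` with the Schur complement `S = H₂⁻¹ - E H₁⁻¹ Eᴴ` and to `diag(H₁ - Eᴴ H₂ E, H₂⁻¹)`,
whose first block is positive semidefinite because `E` is a contraction. The negativity index is
a congruence invariant, superadditive on block diagonals, and not increased by adding a positive
semidefinite diagonal block, so `ν₋(H₁) + ν₋(S) ≤ ν₋(M) ≤ ν₋(H₂⁻¹) = ν₋(H₂) = ν₋(H₁)`.
Hence `S ≥ 0`, and `(H₂u)ᴴ S (H₂u) ≥ 0` is the contraction inequality for `E^[*] = H₁⁻¹ Eᴴ H₂` at `u`.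
-/

/- Setting: column vectors over `ℍ` form right `ℍ`-vector spaces (modules over `ℍᵐᵒᵖ`),
matrices act on the left via `mulVec`, and `ᴴ` is the conjugate transpose.  For a
Hermitian matrix `H`, `v* H v = star v ⬝ᵥ H.mulVec v` is real; the negativity index
`ν₋(H)` is the largest dimension of a right subspace on which the form is strictly
negative. -/

open Quaternion MulOpposite Matrix

/-- The negativity index `ν₋(H)` of a Hermitian quaternionic matrix. -/
noncomputable def negIndex {ι : Type*} [Fintype ι] (H : Matrix ι ι ℍ[ℝ]) : ℕ :=
  sSup {d : ℕ | ∃ W : Submodule ℍ[ℝ]ᵐᵒᵖ (ι → ℍ[ℝ]),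
      Module.finrank ℍ[ℝ]ᵐᵒᵖ W = d ∧
      ∀ v ∈ W, v ≠ 0 → (star v ⬝ᵥ H.mulVec v).re < 0}

instance Module.Finite.mulOpposite_self {A : Type*} [Semiring A] : Module.Finite Aᵐᵒᵖ A := by
  refine ⟨⟨{1}, eq_top_iff.2 fun x _ => ?_⟩⟩
  rw [Finset.coe_singleton, Submodule.mem_span_singleton]
  exact ⟨op x, by rw [op_smul_eq_mul, one_mul]⟩

section BlockCongruence

variable {α m n : Type*} [Ring α] [Fintype m] [Fintype n]
  [DecidableEq m] [DecidableEq n]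

theorem fromBlocks_one_mul_neg_eq_one₁₂ (C : Matrix m n α) :
    fromBlocks (1 : Matrix m m α) C 0 (1 : Matrix n n α) * fromBlocks 1 (-C) 0 1 = 1 := by
  simp [fromBlocks_multiply, fromBlocks_one]

theorem fromBlocks_one_mul_neg_eq_one₂₁ (C : Matrix n m α) :
    fromBlocks (1 : Matrix m m α) 0 C (1 : Matrix n n α) * fromBlocks 1 0 (-C) 1 = 1 := by
  simp [fromBlocks_multiply, fromBlocks_one]

theorem conjTranspose_mul_fromBlocks_mul_of_invertible₁₁ [StarRing α] (A : Matrix m m α)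
    [Invertible A] (hA : Aᴴ = A) (B : Matrix n m α) (D : Matrix n n α) :
    (fromBlocks 1 (-(⅟A * Bᴴ)) 0 1)ᴴ * fromBlocks A Bᴴ B D * fromBlocks 1 (-(⅟A * Bᴴ)) 0 1 =
      fromBlocks A 0 0 (D - B * ⅟A * Bᴴ) := by
  have hA' : (⅟A)ᴴ = ⅟A := IsSelfAdjoint.invOf A hA
  simp [fromBlocks_conjTranspose, fromBlocks_multiply, hA', Matrix.mul_assoc,
    Matrix.mul_invOf_cancel_left, sub_eq_add_neg, add_comm]

theorem conjTranspose_mul_fromBlocks_mul_of_invertible₂₂ [StarRing α] (A : Matrix m m α)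
    (B : Matrix n m α) (D : Matrix n n α) [Invertible D] (hD : Dᴴ = D) :
    (fromBlocks 1 0 (-(⅟D * B)) 1)ᴴ * fromBlocks A Bᴴ B D * fromBlocks 1 0 (-(⅟D * B)) 1 =
      fromBlocks (A - Bᴴ * ⅟D * B) 0 0 D := by
  have hD' : (⅟D)ᴴ = ⅟D := IsSelfAdjoint.invOf D hD
  simp [fromBlocks_conjTranspose, fromBlocks_multiply, hD', Matrix.mul_assoc,
    Matrix.mul_invOf_cancel_left, sub_eq_add_neg]

end BlockCongruence

theorem Quaternion.re_star_mul_mul_self {R : Type*} [CommRing R] (a x : ℍ[R]) :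
    (star a * x * a).re = normSq a * x.re := by
  simp [re_mul, normSq_def', re_star, imI_star, imJ_star, imK_star]
  ring

section QuadForm

variable {ι κ : Type*} [Fintype ι] [Fintype κ]

noncomputable def quadForm (H : Matrix ι ι ℍ[ℝ]) (v : ι → ℍ[ℝ]) : ℝ :=
  (star v ⬝ᵥ H *ᵥ v).re

@[simp]
theorem quadForm_zero_right (H : Matrix ι ι ℍ[ℝ]) : quadForm H 0 = 0 := by
  simp [quadForm]

theorem quadForm_sub (A B : Matrix ι ι ℍ[ℝ]) (v : ι → ℍ[ℝ]) :
    quadForm (A - B) v = quadForm A v - quadForm B v := by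
  simp [quadForm, sub_mulVec, dotProduct_sub]

theorem quadForm_conjTranspose_mul_mul (H : Matrix κ κ ℍ[ℝ]) (X : Matrix κ ι ℍ[ℝ])
    (v : ι → ℍ[ℝ]) : quadForm (Xᴴ * H * X) v = quadForm H (X *ᵥ v) := by
  simp [quadForm, dotProduct_mulVec, star_mulVec, vecMul_vecMul, Matrix.mul_assoc]

theorem quadForm_op_smul (H : Matrix ι ι ℍ[ℝ]) (a : ℍ[ℝ]) (v : ι → ℍ[ℝ]) :
    quadForm H (op a • v) = normSq a * quadForm H v := by
  have hmul : H *ᵥ (op a • v) = op a • H *ᵥ v := mulVec_smul H (op a) v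
  have hdot : star (op a • v) ⬝ᵥ op a • H *ᵥ v = star a * (star v ⬝ᵥ H *ᵥ v) * a := by
    simp only [dotProduct, Finset.mul_sum, Finset.sum_mul]
    refine Finset.sum_congr rfl fun i _ => ?_
    simp [star_mul, mul_assoc]
  rw [quadForm, hmul, hdot, quadForm, re_star_mul_mul_self]

theorem quadForm_fromBlocks_zero₁₂_zero₂₁ (A : Matrix ι ι ℍ[ℝ]) (B : Matrix κ κ ℍ[ℝ])
    (x : ι ⊕ κ → ℍ[ℝ]) :
    quadForm (fromBlocks A 0 0 B) x = quadForm A (x ∘ Sum.inl) + quadForm B (x ∘ Sum.inr) := by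
  have hx : star x = Sum.elim (star (x ∘ Sum.inl)) (star (x ∘ Sum.inr)) := by
    funext i; cases i <;> rfl
  rw [quadForm, fromBlocks_mulVec, hx]
  simp [sumElim_dotProduct_sumElim, quadForm]

end QuadForm

section NegIndex

variable {ι κ : Type*} [Fintype ι] [Fintype κ]

def NegDefOn (H : Matrix ι ι ℍ[ℝ]) (W : Submodule ℍ[ℝ]ᵐᵒᵖ (ι → ℍ[ℝ])) : Prop :=
  ∀ v ∈ W, v ≠ 0 → quadForm H v < 0

theorem NegDefOn.quadForm_nonpos {H : Matrix ι ι ℍ[ℝ]} {W : Submodule ℍ[ℝ]ᵐᵒᵖ (ι → ℍ[ℝ])}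
    (hW : NegDefOn H W) {v : ι → ℍ[ℝ]} (hv : v ∈ W) : quadForm H v ≤ 0 := by
  rcases eq_or_ne v 0 with rfl | hv0
  · simp
  · exact (hW v hv hv0).le

theorem bddAbove_finrank_negDefOn (H : Matrix ι ι ℍ[ℝ]) :
    BddAbove {d : ℕ | ∃ W : Submodule ℍ[ℝ]ᵐᵒᵖ (ι → ℍ[ℝ]),
      Module.finrank ℍ[ℝ]ᵐᵒᵖ W = d ∧ NegDefOn H W} :=
  ⟨Module.finrank ℍ[ℝ]ᵐᵒᵖ (ι → ℍ[ℝ]), by rintro d ⟨W, rfl, -⟩; exact Submodule.finrank_le W⟩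

theorem finrank_le_negIndex {H : Matrix ι ι ℍ[ℝ]} {W : Submodule ℍ[ℝ]ᵐᵒᵖ (ι → ℍ[ℝ])}
    (hW : NegDefOn H W) : Module.finrank ℍ[ℝ]ᵐᵒᵖ W ≤ negIndex H :=
  le_csSup (bddAbove_finrank_negDefOn H) ⟨W, rfl, hW⟩

theorem exists_negDefOn_finrank_eq_negIndex (H : Matrix ι ι ℍ[ℝ]) :
    ∃ W, NegDefOn H W ∧ Module.finrank ℍ[ℝ]ᵐᵒᵖ W = negIndex H := by
  have hne : {d : ℕ | ∃ W : Submodule ℍ[ℝ]ᵐᵒᵖ (ι → ℍ[ℝ]),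
      Module.finrank ℍ[ℝ]ᵐᵒᵖ W = d ∧ NegDefOn H W}.Nonempty :=
    ⟨0, ⊥, finrank_bot _ _, fun v hv hv0 => absurd ((Submodule.mem_bot _).1 hv) hv0⟩
  obtain ⟨W, hrank, hW⟩ := Nat.sSup_mem hne (bddAbove_finrank_negDefOn H)
  exact ⟨W, hW, hrank⟩

theorem negIndex_le_of_linearMap {A : Matrix ι ι ℍ[ℝ]} {B : Matrix κ κ ℍ[ℝ]}
    (f : (ι → ℍ[ℝ]) →ₗ[ℍ[ℝ]ᵐᵒᵖ] (κ → ℍ[ℝ])) (hf : ∀ v, quadForm A v < 0 → quadForm B (f v) < 0) :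
    negIndex A ≤ negIndex B := by
  obtain ⟨W, hW, hrank⟩ := exists_negDefOn_finrank_eq_negIndex A
  have hinj : Function.Injective (f ∘ₗ W.subtype) := by
    rw [← LinearMap.ker_eq_bot, Submodule.eq_bot_iff]
    rintro ⟨v, hv⟩ hfv
    by_contra hv0
    have hneg := hf v (hW v hv (by simpa using hv0))
    have hfv0 : f v = 0 := LinearMap.mem_ker.1 hfv
    rw [hfv0, quadForm_zero_right] at hneg
    exact lt_irrefl 0 hneg
  have hmap : NegDefOn B (W.map f) := by
    rintro _ ⟨v, hv, rfl⟩ hfv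
    exact hf v (hW v hv (by rintro rfl; simp at hfv))
  calc negIndex A = Module.finrank ℍ[ℝ]ᵐᵒᵖ (LinearMap.range (f ∘ₗ W.subtype)) := by
        rw [LinearMap.finrank_range_of_inj hinj, hrank]
    _ ≤ negIndex B := by
        rw [LinearMap.range_comp, Submodule.range_subtype]
        exact finrank_le_negIndex hmap

theorem negIndex_conjTranspose_mul_mul_le (H : Matrix κ κ ℍ[ℝ]) (X : Matrix κ ι ℍ[ℝ]) :
    negIndex (Xᴴ * H * X) ≤ negIndex H :=
  negIndex_le_of_linearMap (mulVecBilin ℍ[ℝ] ℍ[ℝ]ᵐᵒᵖ X) fun v hv => by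
    rwa [quadForm_conjTranspose_mul_mul] at hv

theorem negIndex_conjTranspose_mul_mul_of_mul_eq_one [DecidableEq κ] (H : Matrix κ κ ℍ[ℝ])
    (X : Matrix κ ι ℍ[ℝ]) (Y : Matrix ι κ ℍ[ℝ]) (hXY : X * Y = 1) :
    negIndex (Xᴴ * H * X) = negIndex H := by
  refine (negIndex_conjTranspose_mul_mul_le H X).antisymm ?_
  have hH : Yᴴ * (Xᴴ * H * X) * Y = H := calc
    _ = (X * Y)ᴴ * H * (X * Y) := by simp only [conjTranspose_mul, Matrix.mul_assoc]
    _ = H := by rw [hXY, conjTranspose_one, Matrix.one_mul, Matrix.mul_one]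
  calc negIndex H = negIndex (Yᴴ * (Xᴴ * H * X) * Y) := by rw [hH]
    _ ≤ negIndex (Xᴴ * H * X) := negIndex_conjTranspose_mul_mul_le _ Y

theorem negIndex_invOf [DecidableEq ι] (H : Matrix ι ι ℍ[ℝ]) [Invertible H] (hH : Hᴴ = H) :
    negIndex (⅟H) = negIndex H := by
  have h : (⅟H)ᴴ * H * ⅟H = ⅟H := by
    have hH' : (⅟H)ᴴ = ⅟H := IsSelfAdjoint.invOf H hH
    rw [hH', invOf_mul_self, Matrix.one_mul]
  rw [← negIndex_conjTranspose_mul_mul_of_mul_eq_one H (⅟H) H (invOf_mul_self H), h]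

theorem negIndex_fromBlocks_le_right (A : Matrix ι ι ℍ[ℝ]) (B : Matrix κ κ ℍ[ℝ])
    (hA : ∀ v, 0 ≤ quadForm A v) : negIndex (fromBlocks A 0 0 B) ≤ negIndex B :=
  negIndex_le_of_linearMap (LinearMap.funLeft ℍ[ℝ]ᵐᵒᵖ ℍ[ℝ] Sum.inr) fun x hx => by
    rw [quadForm_fromBlocks_zero₁₂_zero₂₁] at hx
    change quadForm B (x ∘ Sum.inr) < 0
    linarith [hA (x ∘ Sum.inl)]

theorem negIndex_add_negIndex_le_fromBlocks (A : Matrix ι ι ℍ[ℝ]) (B : Matrix κ κ ℍ[ℝ]) :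
    negIndex A + negIndex B ≤ negIndex (fromBlocks A 0 0 B) := by
  obtain ⟨WA, hWA, hrankA⟩ := exists_negDefOn_finrank_eq_negIndex A
  obtain ⟨WB, hWB, hrankB⟩ := exists_negDefOn_finrank_eq_negIndex B
  let f : WA × WB →ₗ[ℍ[ℝ]ᵐᵒᵖ] (ι ⊕ κ → ℍ[ℝ]) :=
    (LinearEquiv.sumArrowLequivProdArrow ι κ ℍ[ℝ]ᵐᵒᵖ ℍ[ℝ]).symm.toLinearMap ∘ₗ
      WA.subtype.prodMap WB.subtype
  have hf : ∀ p, f p ∘ Sum.inl = p.1 ∧ f p ∘ Sum.inr = p.2 := fun p => ⟨rfl, rfl⟩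
  have hinj : Function.Injective f := by
    rw [LinearMap.coe_comp, LinearMap.coe_prodMap]
    exact (LinearEquiv.injective _).comp
      (Prod.map_injective.2 ⟨Subtype.val_injective, Subtype.val_injective⟩)
  have hneg : NegDefOn (fromBlocks A 0 0 B) (LinearMap.range f) := by
    rintro _ ⟨⟨a, b⟩, rfl⟩ hab
    rw [quadForm_fromBlocks_zero₁₂_zero₂₁, (hf _).1, (hf _).2]
    rcases eq_or_ne (a : ι → ℍ[ℝ]) 0 with ha | ha
    · have hb : (b : κ → ℍ[ℝ]) ≠ 0 := fun hb =>
        hab (by rw [show (a, b) = 0 from Prod.ext (Subtype.ext ha) (Subtype.ext hb), map_zero])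
      rw [ha, quadForm_zero_right, zero_add]
      exact hWB b b.2 hb
    · linarith [hWA a a.2 ha, hWB.quadForm_nonpos b.2]
  calc negIndex A + negIndex B = Module.finrank ℍ[ℝ]ᵐᵒᵖ (LinearMap.range f) := by
        rw [LinearMap.finrank_range_of_inj hinj, Module.finrank_prod, hrankA, hrankB]
    _ ≤ _ := finrank_le_negIndex hneg

theorem quadForm_nonneg_of_negIndex_eq_zero {H : Matrix ι ι ℍ[ℝ]} (hH : negIndex H = 0)
    (v : ι → ℍ[ℝ]) : 0 ≤ quadForm H v := by
  by_contra! hv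
  have hv0 : v ≠ 0 := by rintro rfl; simp at hv
  have hspan : NegDefOn H (Submodule.span ℍ[ℝ]ᵐᵒᵖ {v}) := by
    intro w hw hw0
    obtain ⟨c, rfl⟩ := Submodule.mem_span_singleton.1 hw
    induction c using MulOpposite.rec' with | _ a =>
    have ha : a ≠ 0 := by rintro rfl; simp at hw0
    rw [quadForm_op_smul]
    exact mul_neg_of_pos_of_neg (normSq_nonneg.lt_of_ne' (normSq_ne_zero.2 ha)) hv
  have := finrank_le_negIndex hspan
  rw [finrank_span_singleton hv0, hH] at this
  omega

end NegIndex

section Contraction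

variable {ι κ : Type*} [Fintype ι] [Fintype κ]

def IsContraction (H₁ : Matrix ι ι ℍ[ℝ]) (H₂ : Matrix κ κ ℍ[ℝ]) (E : Matrix κ ι ℍ[ℝ]) : Prop :=
  ∀ v, quadForm H₂ (E *ᵥ v) ≤ quadForm H₁ v

theorem isContraction_iff_quadForm_sub_nonneg {H₁ : Matrix ι ι ℍ[ℝ]} {H₂ : Matrix κ κ ℍ[ℝ]}
    {E : Matrix κ ι ℍ[ℝ]} :
    IsContraction H₁ H₂ E ↔ ∀ v, 0 ≤ quadForm (H₁ - Eᴴ * H₂ * E) v := by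
  simp only [IsContraction, quadForm_sub, quadForm_conjTranspose_mul_mul, sub_nonneg]

variable [DecidableEq ι] [DecidableEq κ]

theorem IsContraction.negIndex_invOf_sub_eq_zero {H₁ : Matrix ι ι ℍ[ℝ]} {H₂ : Matrix κ κ ℍ[ℝ]}
    (hH₁ : H₁ᴴ = H₁) (hH₂ : H₂ᴴ = H₂) [Invertible H₁] [Invertible H₂]
    (hind : negIndex H₁ = negIndex H₂) {E : Matrix κ ι ℍ[ℝ]} (hE : IsContraction H₁ H₂ E) :
    negIndex (⅟H₂ - E * ⅟H₁ * Eᴴ) = 0 := by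
  have hupper := conjTranspose_mul_fromBlocks_mul_of_invertible₁₁ H₁ hH₁ E (⅟H₂)
  have hlower := conjTranspose_mul_fromBlocks_mul_of_invertible₂₂ H₁ E (⅟H₂)
    (IsSelfAdjoint.invOf H₂ hH₂)
  rw [invOf_invOf] at hlower
  have := calc negIndex H₁ + negIndex (⅟H₂ - E * ⅟H₁ * Eᴴ)
      _ ≤ negIndex (fromBlocks H₁ 0 0 (⅟H₂ - E * ⅟H₁ * Eᴴ)) :=
        negIndex_add_negIndex_le_fromBlocks _ _
      _ = negIndex (fromBlocks H₁ Eᴴ E (⅟H₂)) := by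
        rw [← hupper, negIndex_conjTranspose_mul_mul_of_mul_eq_one _ _ _
          (fromBlocks_one_mul_neg_eq_one₁₂ _)]
      _ = negIndex (fromBlocks (H₁ - Eᴴ * H₂ * E) 0 0 (⅟H₂)) := by
        rw [← hlower, negIndex_conjTranspose_mul_mul_of_mul_eq_one _ _ _
          (fromBlocks_one_mul_neg_eq_one₂₁ _)]
      _ ≤ negIndex (⅟H₂) :=
        negIndex_fromBlocks_le_right _ _ (isContraction_iff_quadForm_sub_nonneg.1 hE)
      _ = negIndex H₁ := by rw [negIndex_invOf H₂ hH₂, hind]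
  omega

theorem IsContraction.invOf_mul_conjTranspose_mul {H₁ : Matrix ι ι ℍ[ℝ]} {H₂ : Matrix κ κ ℍ[ℝ]}
    (hH₁ : H₁ᴴ = H₁) (hH₂ : H₂ᴴ = H₂) [Invertible H₁] [Invertible H₂]
    (hind : negIndex H₁ = negIndex H₂) {E : Matrix κ ι ℍ[ℝ]} (hE : IsContraction H₁ H₂ E) :
    IsContraction H₂ H₁ (⅟H₁ * Eᴴ * H₂) := by
  intro u
  have h := quadForm_nonneg_of_negIndex_eq_zero
    (hE.negIndex_invOf_sub_eq_zero hH₁ hH₂ hind) (H₂ *ᵥ u)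
  have hP : (⅟H₁)ᴴ = ⅟H₁ := IsSelfAdjoint.invOf H₁ hH₁
  have h₂ : H₂ᴴ * ⅟H₂ * H₂ = H₂ := by rw [hH₂, Matrix.invOf_mul_cancel_right]
  have h₁ : H₂ᴴ * (E * ⅟H₁ * Eᴴ) * H₂ = (⅟H₁ * Eᴴ * H₂)ᴴ * H₁ * (⅟H₁ * Eᴴ * H₂) := by
    simp only [conjTranspose_mul, conjTranspose_conjTranspose, hP, Matrix.mul_assoc,
      Matrix.invOf_mul_cancel_left]
  rwa [quadForm_sub, ← quadForm_conjTranspose_mul_mul, ← quadForm_conjTranspose_mul_mul, h₁, h₂,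
    quadForm_conjTranspose_mul_mul, sub_nonneg] at h

end Contraction

/-- **Theorem**: a contraction `E` between finite-dimensional quaternionic Pontryagin
spaces `(ℍⁿ, H₁)` and `(ℍᵐ, H₂)` of the same negativity index has a contractive
adjoint `E^[*] = H₁⁻¹ Eᴴ H₂`. -/
theorem adjoint_of_contraction_is_contraction {n m : ℕ}
    (H₁ : Matrix (Fin n) (Fin n) ℍ[ℝ]) (H₂ : Matrix (Fin m) (Fin m) ℍ[ℝ])
    (hH₁ : H₁ᴴ = H₁) (hH₂ : H₂ᴴ = H₂)
    [Invertible H₁] [Invertible H₂]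
    (hind : negIndex H₁ = negIndex H₂)
    (E : Matrix (Fin m) (Fin n) ℍ[ℝ])
    (hE : ∀ v : Fin n → ℍ[ℝ],
      (star (E.mulVec v) ⬝ᵥ H₂.mulVec (E.mulVec v)).re ≤ (star v ⬝ᵥ H₁.mulVec v).re) :
    ∀ u : Fin m → ℍ[ℝ],
      (star ((⅟H₁ * Eᴴ * H₂).mulVec u) ⬝ᵥ H₁.mulVec ((⅟H₁ * Eᴴ * H₂).mulVec u)).re ≤
        (star u ⬝ᵥ H₂.mulVec u).re :=
  IsContraction.invOf_mul_conjTranspose_mul hH₁ hH₂ hind hE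
end

section
/- Lemma (no unimodular right eigenvalues): Let T ∈ ℍ^{n×n}, H = H* ∈ ℍ^{n×n} and C ∈ ℍ^{N×n} satisfy (Tv)*H(Tv) ≤ v*Hv − (Cv)*(Cv) for every v ∈ ℍⁿ, and assume the observability condition ⋂_{k≥0} ker(CT^k) = {0} (where the kernels are taken as right-linear maps ℍⁿ → ℍ^N). Then T has no right eigenvalue of modulus 1: there exist no λ ∈ ℍ with |λ| = 1 and v ∈ ℍⁿ, v ≠ 0, such that Tv = vλ. -/
/-! If `T v = v λ` with `|λ| = 1`, then `Re ((T v)* H (T v)) = Re (λ̄ (v* H v) λ) = Re (v* H v)`,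
so the structural inequality forces `(C v)* (C v) ≤ 0`, i.e. `C v = 0`.
Then `C T^k v = (C v) λ^k = 0` for every `k`, and observability gives `v = 0`. -/

/- Column vectors `ι → ℍ` form a right `ℍ`-module (a module over `ℍᵐᵒᵖ`), so `v λ` is written
`op λ • v`; matrices act on the left via `mulVec`. -/

open Quaternion MulOpposite Matrix

namespace Quaternion

variable {R : Type*} [CommRing R]

theorem re_mul_comm (a b : ℍ[R]) : (a * b).re = (b * a).re := by
  simp only [re_mul]
  ring

theorem re_star_mul_mul (μ q : ℍ[R]) : (star μ * q * μ).re = normSq μ * q.re := by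
  rw [re_mul_comm, ← mul_assoc, self_mul_star, coe_mul_eq_smul, re_smul, smul_eq_mul]

theorem re_sum {ι : Type*} (s : Finset ι) (f : ι → ℍ[R]) :
    (∑ i ∈ s, f i).re = ∑ i ∈ s, (f i).re :=
  map_sum (QuaternionAlgebra.reₗ (-1) 0 (-1)) f s

end Quaternion

namespace Matrix

variable {ι : Type*} [Fintype ι]

theorem pow_mulVec_eq_op_pow_smul {A : Type*} [Ring A] [DecidableEq ι]
    {T : Matrix ι ι A} {lam : A} {v : ι → A}
    (h : T *ᵥ v = op lam • v) (k : ℕ) : (T ^ k) *ᵥ v = op (lam ^ k) • v := by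
  induction k with
  | zero => simp
  | succ k ih =>
    rw [pow_succ', ← mulVec_mulVec, ih, mulVec_smul, h, smul_smul, ← op_mul, ← pow_succ']

section CommRing

variable {R : Type*} [CommRing R]

theorem re_star_dotProduct_self (w : ι → ℍ[R]) :
    (star w ⬝ᵥ w).re = ∑ i, normSq (w i) := by
  simp only [dotProduct, Quaternion.re_sum, Pi.star_apply, star_mul_self, re_coe]

theorem re_star_op_smul_dotProduct_mulVec_op_smul (H : Matrix ι ι ℍ[R]) (μ : ℍ[R])
    (v : ι → ℍ[R]) :
    (star (op μ • v) ⬝ᵥ H *ᵥ (op μ • v)).re = normSq μ * (star v ⬝ᵥ H *ᵥ v).re := by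
  have hstar : star (op μ • v) = star μ • star v := by
    funext i
    simp
  rw [hstar, mulVec_smul, smul_dotProduct, dotProduct_smul, op_smul_eq_mul, smul_eq_mul,
    ← mul_assoc, re_star_mul_mul]

end CommRing

theorem eq_zero_of_re_star_dotProduct_self_nonpos {w : ι → ℍ[ℝ]}
    (hw : (star w ⬝ᵥ w).re ≤ 0) : w = 0 := by
  rw [re_star_dotProduct_self] at hw
  have hnonneg : ∀ i ∈ Finset.univ, 0 ≤ normSq (w i) := fun _ _ => normSq_nonneg
  have hsum := le_antisymm hw (Finset.sum_nonneg hnonneg)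
  funext i
  exact normSq_eq_zero.mp ((Finset.sum_eq_zero_iff_of_nonneg hnonneg).mp hsum i
    (Finset.mem_univ i))

theorem mulVec_eq_zero_of_mulVec_eq_op_smul_of_norm_eq_one {κ : Type*} [Fintype κ]
    {T H : Matrix ι ι ℍ[ℝ]} {C : Matrix κ ι ℍ[ℝ]}
    (hineq : ∀ v : ι → ℍ[ℝ],
      (star (T *ᵥ v) ⬝ᵥ H *ᵥ (T *ᵥ v)).re ≤
        (star v ⬝ᵥ H *ᵥ v).re - (star (C *ᵥ v) ⬝ᵥ C *ᵥ v).re)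
    {lam : ℍ[ℝ]} {v : ι → ℍ[ℝ]} (hlam : ‖lam‖ = 1) (heig : T *ᵥ v = op lam • v) :
    C *ᵥ v = 0 := by
  have hnormSq : normSq lam = 1 := by
    rw [normSq_eq_norm_mul_self, hlam, mul_one]
  have h := hineq v
  rw [heig, re_star_op_smul_dotProduct_mulVec_op_smul, hnormSq, one_mul] at h
  exact eq_zero_of_re_star_dotProduct_self_nonpos (by linarith)

end Matrix

theorem no_unimodular_right_eigenvalue_general {n N : ℕ}
    (T H : Matrix (Fin n) (Fin n) ℍ[ℝ]) (C : Matrix (Fin N) (Fin n) ℍ[ℝ])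
    (hineq : ∀ v : Fin n → ℍ[ℝ],
      (star (T.mulVec v) ⬝ᵥ H.mulVec (T.mulVec v)).re ≤
        (star v ⬝ᵥ H.mulVec v).re - (star (C.mulVec v) ⬝ᵥ C.mulVec v).re)
    (hobs : ∀ v : Fin n → ℍ[ℝ], (∀ k : ℕ, (C * T ^ k).mulVec v = 0) → v = 0) :
    ¬ ∃ (lam : ℍ[ℝ]) (v : Fin n → ℍ[ℝ]),
        ‖lam‖ = 1 ∧ v ≠ 0 ∧ T.mulVec v = op lam • v := by
  rintro ⟨lam, v, hlam, hv, heig⟩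
  have hCv : C *ᵥ v = 0 := mulVec_eq_zero_of_mulVec_eq_op_smul_of_norm_eq_one hineq hlam heig
  refine hv (hobs v fun k => ?_)
  rw [← mulVec_mulVec, pow_mulVec_eq_op_pow_smul heig, mulVec_smul, hCv, smul_zero]

/-- **Lemma (no unimodular right eigenvalues)**: if
`(Tv)* H (Tv) ≤ v* H v − (Cv)*(Cv)` for all `v` and `⋂_k ker (C T^k) = {0}`, then `T`
has no right eigenvalue of modulus `1`. -/
theorem no_unimodular_right_eigenvalue {n N : ℕ}
    (T H : Matrix (Fin n) (Fin n) ℍ[ℝ]) (C : Matrix (Fin N) (Fin n) ℍ[ℝ])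
    (hH : Hᴴ = H)
    (hineq : ∀ v : Fin n → ℍ[ℝ],
      (star (T.mulVec v) ⬝ᵥ H.mulVec (T.mulVec v)).re ≤
        (star v ⬝ᵥ H.mulVec v).re - (star (C.mulVec v) ⬝ᵥ C.mulVec v).re)
    (hobs : ∀ v : Fin n → ℍ[ℝ], (∀ k : ℕ, (C * T ^ k).mulVec v = 0) → v = 0) :
    ¬ ∃ (lam : ℍ[ℝ]) (v : Fin n → ℍ[ℝ]),
        ‖lam‖ = 1 ∧ v ≠ 0 ∧ T.mulVec v = op lam • v :=
  no_unimodular_right_eigenvalue_general T H C hineq hobs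
end

section
/- Proposition: Let A ∈ ℍ^{M×M} and C ∈ ℍ^{N×M} be such that ⋂_{k≥0} ker(CA^k) = {0} (kernels taken as right-linear maps ℍ^M → ℍ^N), and let P ∈ ℍ^{M×M} be an invertible Hermitian solution of the Stein equation P − A*PA = C*C. Then the matrix I_M − A is invertible. -/
/-!
A vector fixed by `A` is annihilated by `C`: pairing the Stein equation with `v` gives
`‖C v‖² = v*Pv − (Av)*P(Av) = 0`. Hence `C Aᵏ v = C v = 0` for every `k`, and observability forces
`v = 0`. So `I − A` is injective, and an injective square matrix over a division ring is
invertible.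
-/

open Quaternion Matrix

theorem Quaternion.star_dotProduct_self_eq_zero {n : Type*} [Fintype n] {v : n → ℍ[ℝ]} :
    star v ⬝ᵥ v = 0 ↔ v = 0 := by
  refine ⟨fun h => ?_, fun h => by simp [h]⟩
  have hsum : ∑ i, normSq (v i) = 0 := by
    refine coe_injective (R := ℝ) (.trans ?_ (h.trans coe_zero.symm))
    simp only [dotProduct, Pi.star_apply, star_mul_self]
    exact map_sum (algebraMap ℝ ℍ[ℝ]) _ _
  have hzero := (Finset.sum_eq_zero_iff_of_nonneg fun i _ => normSq_nonneg).mp hsum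
  exact funext fun i => normSq_eq_zero.mp (hzero i (Finset.mem_univ i))

namespace Matrix

variable {m n R : Type*} [Fintype m] [Fintype n]

theorem isUnit_iff_mulVec_injective_of_divisionRing [DecidableEq n] [DivisionRing R]
    {A : Matrix n n R} : IsUnit A ↔ Function.Injective A.mulVec :=
  IsArtinianRing.isUnit_iff_isLeftRegular.trans isLeftRegular_iff_mulVec_injective

theorem pow_mulVec_eq_self [DecidableEq n] [Semiring R] {A : Matrix n n R} {v : n → R}
    (hv : A *ᵥ v = v) (k : ℕ) : (A ^ k) *ᵥ v = v := by
  induction k with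
  | zero => simp
  | succ k ih => rw [pow_succ, ← mulVec_mulVec, hv, ih]

variable [NonUnitalSemiring R] [StarRing R]

theorem star_dotProduct_conjTranspose_mul_self_mulVec (C : Matrix m n R) (v : n → R) :
    star v ⬝ᵥ ((Cᴴ * C) *ᵥ v) = star (C *ᵥ v) ⬝ᵥ (C *ᵥ v) := by
  rw [← mulVec_mulVec, dotProduct_mulVec, star_mulVec]

theorem star_dotProduct_conjTranspose_mul_mul_mulVec_of_mulVec_eq_self {A : Matrix n n R}
    {v : n → R} (hv : A *ᵥ v = v) (P : Matrix n n R) :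
    star v ⬝ᵥ ((Aᴴ * P * A) *ᵥ v) = star v ⬝ᵥ (P *ᵥ v) := by
  rw [← mulVec_mulVec, ← mulVec_mulVec, hv, dotProduct_mulVec, ← star_mulVec, hv]

end Matrix

section Stein

variable {m n : Type*} [Fintype m] [Fintype n] {A P : Matrix n n ℍ[ℝ]} {C : Matrix m n ℍ[ℝ]}

theorem mulVec_eq_zero_of_stein_of_mulVec_eq_self (hstein : P - Aᴴ * P * A = Cᴴ * C)
    {v : n → ℍ[ℝ]} (hv : A *ᵥ v = v) : C *ᵥ v = 0 := by
  rw [← star_dotProduct_self_eq_zero, ← star_dotProduct_conjTranspose_mul_self_mulVec, ← hstein,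
    sub_mulVec, dotProduct_sub,
    star_dotProduct_conjTranspose_mul_mul_mulVec_of_mulVec_eq_self hv, sub_self]

theorem eq_zero_of_stein_of_mulVec_eq_self [DecidableEq n]
    (hobs : ∀ v : n → ℍ[ℝ], (∀ k : ℕ, (C * A ^ k) *ᵥ v = 0) → v = 0)
    (hstein : P - Aᴴ * P * A = Cᴴ * C) {v : n → ℍ[ℝ]} (hv : A *ᵥ v = v) : v = 0 :=
  hobs v fun k => by
    rw [← mulVec_mulVec, pow_mulVec_eq_self hv, mulVec_eq_zero_of_stein_of_mulVec_eq_self hstein hv]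

end Stein

theorem one_sub_A_invertible_general {M N : ℕ}
    (A : Matrix (Fin M) (Fin M) ℍ[ℝ]) (C : Matrix (Fin N) (Fin M) ℍ[ℝ])
    (hobs : ∀ v : Fin M → ℍ[ℝ], (∀ k : ℕ, (C * A ^ k).mulVec v = 0) → v = 0)
    (P : Matrix (Fin M) (Fin M) ℍ[ℝ])
    (hstein : P - Aᴴ * P * A = Cᴴ * C) :
    IsUnit (1 - A) := by
  refine isUnit_iff_mulVec_injective_of_divisionRing.mpr fun x y hxy => sub_eq_zero.mp ?_
  refine eq_zero_of_stein_of_mulVec_eq_self hobs hstein ?_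
  simp only [sub_mulVec, one_mulVec] at hxy
  rw [mulVec_sub]
  exact (sub_eq_sub_iff_sub_eq_sub.mp hxy).symm

/-- **Proposition**: if `(C, A)` is observable and `P` is an invertible Hermitian
solution of the Stein equation `P − A* P A = C* C`, then `I_M − A` is invertible. -/
theorem one_sub_A_invertible {M N : ℕ}
    (A : Matrix (Fin M) (Fin M) ℍ[ℝ]) (C : Matrix (Fin N) (Fin M) ℍ[ℝ])
    (hobs : ∀ v : Fin M → ℍ[ℝ], (∀ k : ℕ, (C * A ^ k).mulVec v = 0) → v = 0)
    (P : Matrix (Fin M) (Fin M) ℍ[ℝ]) (hP : Pᴴ = P) (hPinv : IsUnit P)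
    (hstein : P - Aᴴ * P * A = Cᴴ * C) :
    IsUnit (1 - A) :=
  one_sub_A_invertible_general A C hobs P hstein
end
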